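/- Fix integers 1 ≤ d < n, a field k, m ∈ I_{d,n} and an m-primary relation F = F_{m,u_F} with leading index s_F. Then in the polynomial ring over k with variables x_w (w ∈ I_{d,n} ∖ {m}) and x_P (P ∈ Λ_F), for all s, t ∈ S_F ∖ {s_F} one has the identity x_{(m,u_F)}·B_{F,(s,t)} = x_{(u_t,v_t)}·B_{F,(s_F,s)} − x_{(u_s,v_s)}·B_{F,(s_F,t)}. Consequently, in the localization of this ring at x_{(m,u_F)}, every residual binomial B_{F,(s,t)} lies in the ideal generated by the main binomials {B_{F,(s_F,r)} : r ∈ S_F ∖ {s_F}}. -/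

import Mathlib

namespace GrassmannianResolution

/-- `I_{d,n}`: the set of `d`-element subsets of `{1,…,n}` (as subsets of `Fin n`). -/
abbrev Idn (d n : ℕ) : Type := {s : Finset (Fin n) // s.card = d}

/-- The Plücker coordinate `p_{s₁ ⋯ s_{d-1} a}` of the list consisting of the elements of `s`
in increasing order followed by `a`, with the standard sign/zero conventions:
it is `0` if the entries are not pairwise distinct (or do not form a valid index),
and otherwise the sign of the sorting permutation times the corresponding variable. -/
noncomputable def pxa (d n : ℕ) (K : Type*) [CommRing K] (s : Finset (Fin n)) (a : Fin n) :
    MvPolynomial (Idn d n) K :=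
  if h : a ∉ s ∧ (insert a s).card = d then
    ((-1 : ℤ) ^ (s.filter fun x => a < x).card) • MvPolynomial.X ⟨insert a s, h.2⟩
  else 0

/-- The Plücker coordinate `p_{a s₁ ⋯ s_{d-1}}` (`a` prepended to the sorted list of `s`). -/
noncomputable def pax (d n : ℕ) (K : Type*) [CommRing K] (a : Fin n) (s : Finset (Fin n)) :
    MvPolynomial (Idn d n) K :=
  if h : a ∉ s ∧ (insert a s).card = d then
    ((-1 : ℤ) ^ (s.filter fun x => x < a).card) • MvPolynomial.X ⟨insert a s, h.2⟩
  else 0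

/-- `p_s` for an index set `s` (listed in increasing order). -/
noncomputable def pvar (d n : ℕ) (K : Type*) [CommRing K] (s : Finset (Fin n)) :
    MvPolynomial (Idn d n) K :=
  if h : s.card = d then MvPolynomial.X ⟨s, h⟩ else 0

/-- The Plücker relation `F_{h,K} = Σ_{λ} (−1)^{λ−1} p_{h K_λ} p_{K ∖ K_λ}`. -/
noncomputable def pluckerRel (d n : ℕ) (K : Type*) [CommRing K] (hh Kk : Finset (Fin n)) :
    MvPolynomial (Idn d n) K :=
  ∑ c ∈ Kk, ((-1 : ℤ) ^ ((Kk.filter fun x => x ≤ c).card + 1)) •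
    (pxa d n K hh c * pvar d n K (Kk.erase c))

/-- The `m`-primary Plücker relation
`F_{m,u} = p_m p_{u^r u₀} + Σ_{i=1}^d (−1)^i p_{u^r m_i} p_{u₀ (m ∖ m_i)}`,
where `u₀ = min (u ∖ m)` and `u^r = u ∖ {u₀}`. -/
noncomputable def primaryRel (d n : ℕ) (K : Type*) [CommRing K] (m u : Idn d n) :
    MvPolynomial (Idn d n) K :=
  if h : (u.1 \ m.1).Nonempty then
    MvPolynomial.X m * pxa d n K (u.1.erase ((u.1 \ m.1).min' h)) ((u.1 \ m.1).min' h)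
      + ∑ c ∈ m.1, ((-1 : ℤ) ^ (m.1.filter fun x => x ≤ c).card) •
          (pxa d n K (u.1.erase ((u.1 \ m.1).min' h)) c *
            pax d n K ((u.1 \ m.1).min' h) (m.1.erase c))
  else 0

/-- Dehomogenization at the chart `p_m = 1`: the `K`-algebra map sending `p_m ↦ 1` and
`p_u ↦ x_u` for `u ≠ m`. -/
noncomputable def dehom (d n : ℕ) (K : Type*) [CommRing K] (m : Idn d n) :
    MvPolynomial (Idn d n) K →ₐ[K] MvPolynomial {w : Idn d n // w ≠ m} K :=
  MvPolynomial.aeval fun w => if h : w = m then 1 else MvPolynomial.X ⟨w, h⟩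

/-- The set of (unordered) pairs `Λ_F` of a primary relation `F = F_{m,u}`, encoded as
two-element sets of index sets. -/
def lamF {d n : ℕ} (m u : Idn d n) : Finset (Finset (Finset (Fin n))) :=
  if h : (u.1 \ m.1).Nonempty then
    insert {m.1, u.1}
      ((m.1 \ u.1).image fun c =>
        {insert c (u.1.erase ((u.1 \ m.1).min' h)),
          insert ((u.1 \ m.1).min' h) (m.1.erase c)})
  else ∅

/-- The polynomial ring over `K` with variables `x_w` (`w ∈ I_{d,n} ∖ {m}`) and
`x_P` (`P ∈ Λ_F`), for `F = F_{m,u}`. -/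
abbrev Ring11 (d n : ℕ) (K : Type*) [CommRing K] (m u : Idn d n) : Type _ :=
  MvPolynomial ({w : Idn d n // w ≠ m} ⊕ {P : Finset (Finset (Fin n)) // P ∈ lamF m u}) K

/-- The identity
`x_{(m,u_F)}·B_{F,(s,t)} = x_{(u_t,v_t)}·B_{F,(s_F,s)} − x_{(u_s,v_s)}·B_{F,(s_F,t)}`
between residual and main binomials; consequently, in the localization at `x_{(m,u_F)}`,
every residual binomial lies in the ideal generated by the main binomials. -/
theorem residual_binomials_from_main_binomials
    (d n : ℕ) (hd : 1 ≤ d) (hdn : d < n) (K : Type*) [Field K]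
    (m u : Idn d n) (hu : 2 ≤ (u.1 \ m.1).card) :
    let u0 : Fin n := (u.1 \ m.1).min' (Finset.card_pos.mp (by omega))
    let A : Fin n → Finset (Fin n) := fun c => insert c (u.1.erase u0)
    let B : Fin n → Finset (Fin n) := fun c => insert u0 (m.1.erase c)
    let pr : Fin n → Finset (Finset (Fin n)) := fun c => {A c, B c}
    let xw : Finset (Fin n) → Ring11 d n K m u := fun s =>
      if h : s.card = d then
        (if h2 : (⟨s, h⟩ : Idn d n) ≠ m then MvPolynomial.X (Sum.inl ⟨⟨s, h⟩, h2⟩) else 0)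
      else 0
    let xp : Finset (Finset (Fin n)) → Ring11 d n K m u := fun P =>
      if h : P ∈ lamF m u then MvPolynomial.X (Sum.inr ⟨P, h⟩) else 0
    let main : Fin n → Ring11 d n K m u := fun c =>
      xp (pr c) * xw u.1 - xp {m.1, u.1} * xw (A c) * xw (B c)
    let res : Fin n → Fin n → Ring11 d n K m u := fun c c' =>
      xp (pr c) * xw (A c') * xw (B c') - xp (pr c') * xw (A c) * xw (B c)
    (∀ c ∈ m.1 \ u.1, ∀ c' ∈ m.1 \ u.1,
        xp {m.1, u.1} * res c c' = xp (pr c') * main c - xp (pr c) * main c') ∧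
    (∀ c ∈ m.1 \ u.1, ∀ c' ∈ m.1 \ u.1,
        algebraMap (Ring11 d n K m u) (Localization.Away (xp {m.1, u.1})) (res c c')
          ∈ Ideal.span
              (⇑(algebraMap (Ring11 d n K m u) (Localization.Away (xp {m.1, u.1}))) ''
                {q : Ring11 d n K m u | ∃ c'' ∈ m.1 \ u.1, q = main c''})) := by
  intro u0 A B pr xw xp main res
  constructor
  · intro c _ c' _
    simp only [main, res]
    ring
  · intro c hc c' hc'
    set φ := algebraMap (Ring11 d n K m u) (Localization.Away (xp {m.1, u.1})) with hφ
    have hunit : IsUnit (φ (xp {m.1, u.1})) :=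
      IsLocalization.map_units (M := Submonoid.powers (xp {m.1, u.1})) _
        ⟨_, Submonoid.mem_powers _⟩
    obtain ⟨v, hv⟩ := hunit
    have key : φ (xp {m.1, u.1}) * φ (res c c') =
        φ (xp (pr c')) * φ (main c) - φ (xp (pr c)) * φ (main c') := by
      rw [← map_mul, ← map_mul, ← map_mul, ← map_sub]
      refine congrArg φ ?_
      simp only [main, res]
      ring
    have hmc : φ (main c) ∈ Ideal.span (φ '' {q | ∃ c'' ∈ m.1 \ u.1, q = main c''}) :=
      Ideal.subset_span ⟨main c, ⟨c, hc, rfl⟩, rfl⟩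
    have hmc' : φ (main c') ∈ Ideal.span (φ '' {q | ∃ c'' ∈ m.1 \ u.1, q = main c''}) :=
      Ideal.subset_span ⟨main c', ⟨c', hc', rfl⟩, rfl⟩
    have hmem : φ (xp {m.1, u.1}) * φ (res c c') ∈
        Ideal.span (φ '' {q | ∃ c'' ∈ m.1 \ u.1, q = main c''}) := by
      rw [key]
      exact sub_mem (Ideal.mul_mem_left _ _ hmc) (Ideal.mul_mem_left _ _ hmc')
    have h2 := Ideal.mul_mem_left _ ((↑v⁻¹ : Localization.Away (xp {m.1, u.1}))) hmem
    rwa [← mul_assoc, ← hv, Units.inv_mul, one_mul] at h2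

end GrassmannianResolution
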